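/- Let β, ε ∈ ℝ, set δ = βε/2, and let M be the 4×4 lower triangular matrix with rows (1,0,0,0), (0,1,0,0), (0,β,1,0), (0,δ,ε,1). Let E be the 4-dimensional PW-space on ([0,2];(1)) whose elements are pairs (P,Q) of real polynomials of degree at most 3 satisfying (Q(1),Q′(1),Q″(1),Q‴(1)) = M·(P(1),P′(1),P″(1),P‴(1)). Then E is an ECP-space good for design on ([0,2];(1)) if and only if β > −4 and ε > −4. -/

import Mathlib

open Set

/-- The `j`-th derivative of a polynomial. -/
noncomputable def pder : ℕ → Polynomial ℝ → Polynomial ℝ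
  | 0, R => R
  | (j + 1), R => Polynomial.derivative (pder j R)

/-- Evaluation of the `j`-th derivative at `x`. -/
noncomputable def pev (R : Polynomial ℝ) (j : ℕ) (x : ℝ) : ℝ :=
  (pder j R).eval x

/-- The connection condition at the knot `1`: the vector of derivatives of `Q` of
orders `0,…,3` at `1` equals `M` times that of `P`. -/
def Conn4 (M : Matrix (Fin 4) (Fin 4) ℝ) (P Q : Polynomial ℝ) : Prop :=
  ∀ i : Fin 4, pev Q (i : ℕ) 1 = ∑ j : Fin 4, M i j * pev P (j : ℕ) 1

/-- Multiplicity (capped at `3`) of `x` as a zero of the piecewise function with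
sections `p` on `[0,1]` and `q` on `[1,2]` (right side at `0` and at the knot `1`,
left side at `2`). -/
noncomputable def pmult (p q : Polynomial ℝ) (x : ℝ) : ℕ :=
  sSup {m | m ≤ 3 ∧ ∀ j < m, pev (if x < 1 then p else q) j x = 0}

/-- `E` (the space of pairs `(P,Q)` of cubics satisfying the connection condition `M`
at the knot `1`) is an ECP-space good for design on `([0,2];(1))`: every nonzero element
`(P',Q')` of the derived space `DE` has at most `2` zeros in `[0,2]`, counted with
multiplicities up to `3`. -/
def GoodForDesign (M : Matrix (Fin 4) (Fin 4) ℝ) : Prop :=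
  ∀ P Q : Polynomial ℝ, P.natDegree ≤ 3 → Q.natDegree ≤ 3 → Conn4 M P Q →
    ¬(Polynomial.derivative P = 0 ∧ Polynomial.derivative Q = 0) →
    ∀ S : Finset ℝ, (↑S : Set ℝ) ⊆ Set.Icc (0 : ℝ) 2 →
      ∑ x ∈ S, pmult (Polynomial.derivative P) (Polynomial.derivative Q) x ≤ 2

/-!
Write `p = P'` and `q = Q'`; these are quadratics whose jets at the knot determine each other
through the connection matrix. If `p = a (X - r₁)(X - r₂)` with `r₁, r₂ ∈ [0,1)`, Taylor's
formula at `1` gives `q(1 + u) = a · Φ(1 - r₁, 1 - r₂, u)` for an explicit form `Φ`, which is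
positive on the unit cube when `β, ε > -4`; symmetrically, two zeros of `q` in `[1,2]` force
`p(1 - u) = b · Φ(s₁ - 1, s₂ - 1, u) ≠ 0`. Since the multiplicity of a zero is at most its
root multiplicity and a nonzero quadratic has at most two roots, the total count is at most `2`.
Conversely, for `t = -4/β ∈ (0,1]` the pair `(3(X - 1 + t)², 3(X - 1 - t)²)` lies in `DE` and
has two double zeros, and for `ε ≤ -4` the pair `(6X(X - 1), 3(X - 1)((ε + 2)X - ε))` vanishes
at `0`, `1` and `ε/(ε + 2) ∈ (1,2]`.
-/

open Polynomial

namespace Polynomial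

variable {R : Type*} [CommRing R] [IsDomain R]

theorem sum_rootMultiplicity_eq_card_filter_roots [DecidableEq R] (p : R[X]) (T : Finset R) :
    ∑ x ∈ T, p.rootMultiplicity x = Multiset.card (p.roots.filter (· ∈ T)) := by
  rw [← Multiset.sum_count_eq_card (s := T) fun a ha => (Multiset.mem_filter.1 ha).2]
  refine Finset.sum_congr rfl fun x hx => ?_
  rw [Multiset.count_filter_of_pos hx, count_roots]

theorem sum_rootMultiplicity_le_natDegree (p : R[X]) (T : Finset R) :
    ∑ x ∈ T, p.rootMultiplicity x ≤ p.natDegree := by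
  classical
  rw [sum_rootMultiplicity_eq_card_filter_roots]
  exact (Multiset.card_le_card (Multiset.filter_le _ _)).trans (card_roots' p)

theorem exists_eq_C_mul_X_sub_C_mul_X_sub_C {p : R[X]} (hp : p.natDegree ≤ 2) {T : Finset R}
    (hT : 2 ≤ ∑ x ∈ T, p.rootMultiplicity x) :
    ∃ r₁ ∈ T, ∃ r₂ ∈ T, p = C p.leadingCoeff * ((X - C r₁) * (X - C r₂)) := by
  classical
  rw [sum_rootMultiplicity_eq_card_filter_roots] at hT
  have hle := Multiset.card_le_card (Multiset.filter_le (· ∈ T) p.roots)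
  have hcard : Multiset.card p.roots = p.natDegree := by linarith [card_roots' p]
  have hfilter : p.roots.filter (· ∈ T) = p.roots :=
    Multiset.eq_of_le_of_card_le (Multiset.filter_le _ _) (by omega)
  obtain ⟨r₁, r₂, hr⟩ := Multiset.card_eq_two.1 (show Multiset.card p.roots = 2 by omega)
  have hmem : ∀ r ∈ p.roots, r ∈ T := fun r h => (Multiset.mem_filter.1 (hfilter ▸ h)).2
  refine ⟨r₁, hmem _ (by simp [hr]), r₂, hmem _ (by simp [hr]), ?_⟩
  conv_lhs => rw [← C_leadingCoeff_mul_prod_multiset_X_sub_C hcard, hr]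
  simp

variable {K : Type*} [Field K] [CharZero K]

theorem eval_eq_taylor_of_natDegree_le_two {r : K[X]} (hr : r.natDegree ≤ 2) (c x : K) :
    r.eval x = r.eval c + (derivative r).eval c * (x - c)
      + (derivative (derivative r)).eval c / 2 * (x - c) ^ 2 := by
  rw [as_sum_range' r 3 (by omega)]
  simp only [Finset.sum_range_succ, Finset.range_one, Finset.sum_singleton, monomial_zero_left,
    eval_add, eval_C, eval_monomial, pow_one, derivative_C, derivative_monomial_succ,
    CharP.cast_eq_zero, zero_add, mul_one, Nat.cast_one, map_mul, map_add, map_one, eval_mul,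
    eval_one]
  ring

theorem eq_zero_of_natDegree_le_two {r : K[X]} (hr : r.natDegree ≤ 2) {c : K}
    (h₀ : r.eval c = 0) (h₁ : (derivative r).eval c = 0)
    (h₂ : (derivative (derivative r)).eval c = 0) : r = 0 :=
  Polynomial.funext fun x => by simp [eval_eq_taylor_of_natDegree_le_two hr c x, h₀, h₁, h₂]

end Polynomial

theorem convex_combination_pos {a b c x y z : ℝ} (ha : 0 ≤ a) (hb : 0 ≤ b) (hc : 0 ≤ c)
    (habc : a + b + c = 1) (hx : 0 < x) (hy : 0 < y) (hz : 0 < z) :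
    0 < a * x + b * y + c * z := by
  have hm : 0 < min x (min y z) := lt_min hx (lt_min hy hz)
  nlinarith [mul_le_mul_of_nonneg_left (min_le_left x (min y z)) ha,
    mul_le_mul_of_nonneg_left ((min_le_right x (min y z)).trans (min_le_left y z)) hb,
    mul_le_mul_of_nonneg_left ((min_le_right x (min y z)).trans (min_le_right y z)) hc]

theorem pder_eq_iterate (j : ℕ) (R : ℝ[X]) : pder j R = derivative^[j] R := by
  induction j with
  | zero => rfl
  | succ j ih => rw [Function.iterate_succ_apply', ← ih]; rfl

theorem le_pmult {p q : ℝ[X]} {x : ℝ} {m : ℕ} (hm : m ≤ 3)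
    (h : ∀ j < m, pev (if x < 1 then p else q) j x = 0) : m ≤ pmult p q x :=
  le_csSup ⟨3, fun _ hk => hk.1⟩ ⟨hm, h⟩

theorem pmult_le_rootMultiplicity_of_eq {p q r : ℝ[X]} {x : ℝ} (hr : r ≠ 0)
    (hx : (if x < 1 then p else q) = r) : pmult p q x ≤ r.rootMultiplicity x := by
  obtain ⟨-, hvanish⟩ :
      pmult p q x ∈ {m | m ≤ 3 ∧ ∀ j < m, pev (if x < 1 then p else q) j x = 0} :=
    Nat.sSup_mem ⟨0, by simp⟩ ⟨3, fun _ hm => hm.1⟩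
  rw [hx] at hvanish
  rcases Nat.eq_zero_or_eq_succ_pred (pmult p q x) with h0 | hsucc
  · omega
  · rw [hsucc, Nat.succ_le_iff, lt_rootMultiplicity_iff_isRoot_iterate_derivative hr]
    intro j hj
    rw [IsRoot, ← pder_eq_iterate]
    exact hvanish j (by omega)

noncomputable abbrev connMatrix (β ε : ℝ) : Matrix (Fin 4) (Fin 4) ℝ :=
  !![1, 0, 0, 0; 0, 1, 0, 0; 0, β, 1, 0; 0, β * ε / 2, ε, 1]

/-- The connection condition of `DE`: `connMatrix` with its first row and column deleted. -/
def DerivedConn (β ε : ℝ) (p q : ℝ[X]) : Prop :=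
  q.eval 1 = p.eval 1 ∧
    (derivative q).eval 1 = β * p.eval 1 + (derivative p).eval 1 ∧
    (derivative (derivative q)).eval 1 =
      β * ε / 2 * p.eval 1 + ε * (derivative p).eval 1 + (derivative (derivative p)).eval 1

theorem conn4_connMatrix_iff {β ε : ℝ} {P Q : ℝ[X]} :
    Conn4 (connMatrix β ε) P Q ↔
      Q.eval 1 = P.eval 1 ∧ DerivedConn β ε (derivative P) (derivative Q) := by
  simp [Conn4, DerivedConn, Fin.forall_fin_succ, Fin.sum_univ_four, pev, pder]

/-- `connForm β ε (1 - r₁) (1 - r₂) u` is `q(1 + u) / a` when `p = a (X - r₁)(X - r₂)` and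
`(p, q)` satisfies `DerivedConn β ε`. -/
noncomputable def connForm (β ε g g' u : ℝ) : ℝ :=
  g * g' + (g + g' + β * g * g') * u + (1 + ε * (g + g') / 2 + β * ε * g * g' / 4) * u ^ 2

theorem connForm_pos {β ε g g' u : ℝ} (hβ : -4 < β) (hε : -4 < ε)
    (hg : g ∈ Icc (0 : ℝ) 1) (hg' : g' ∈ Icc (0 : ℝ) 1) (hu : u ∈ Icc (0 : ℝ) 1)
    (h : 0 < u ∨ 0 < g * g') : 0 < connForm β ε g g' u := by
  obtain ⟨hg0, hg1⟩ := hg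
  obtain ⟨hg'0, hg'1⟩ := hg'
  obtain ⟨hu0, hu1⟩ := hu
  have hβ4 : 0 < β + 4 := by linarith
  have hε4 : 0 < ε + 4 := by linarith
  -- `connForm` is affine in `g` and in `g'`: bilinear interpolation of its values at the corners.
  have hbilin : connForm β ε g g' u =
      (1 - g) * (1 - g') * u ^ 2
        + (g * (1 - g') + (1 - g) * g') * (u * (1 - u) + (ε + 4) * u ^ 2 / 2)
        + g * g' * ((1 - u) ^ 2 + (β + 4) * u * (1 - u) + (β + 4) * (ε + 4) * u ^ 2 / 4) := by
    unfold connForm; ring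
  have hw00 : 0 ≤ (1 - g) * (1 - g') := mul_nonneg (by linarith) (by linarith)
  have hw10 : 0 ≤ g * (1 - g') + (1 - g) * g' := by nlinarith
  have hu1u : 0 ≤ u * (1 - u) := mul_nonneg hu0 (by linarith)
  have hv11 : 0 < (1 - u) ^ 2 + (β + 4) * u * (1 - u) + (β + 4) * (ε + 4) * u ^ 2 / 4 := by
    rcases hu1.lt_or_eq with hlt | rfl
    · nlinarith [pow_pos (sub_pos.2 hlt) 2, mul_pos hβ4 hε4]
    · nlinarith [mul_pos hβ4 hε4]
  rw [hbilin]
  rcases h with hu | hgg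
  · exact convex_combination_pos hw00 hw10 (by positivity) (by ring) (by positivity)
      (by nlinarith [mul_pos hε4 (pow_pos hu 2)]) hv11
  · have hv10 : 0 ≤ u * (1 - u) + (ε + 4) * u ^ 2 / 2 := by positivity
    exact add_pos_of_nonneg_of_pos (by positivity) (mul_pos hgg hv11)

namespace DerivedConn

variable {β ε : ℝ} {p q : ℝ[X]}

theorem eq_zero_iff (hconn : DerivedConn β ε p q) (hp : p.natDegree ≤ 2)
    (hq : q.natDegree ≤ 2) : p = 0 ↔ q = 0 := by
  obtain ⟨h₀, h₁, h₂⟩ := hconn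
  constructor
  · rintro rfl
    exact eq_zero_of_natDegree_le_two hq (c := 1) (by simpa using h₀) (by simpa using h₁)
      (by simpa using h₂)
  · rintro rfl
    simp only [eval_zero, derivative_zero] at h₀ h₁ h₂
    exact eq_zero_of_natDegree_le_two hp (c := 1) h₀.symm
      (by linear_combination -h₁ + β * h₀)
      (by linear_combination -h₂ + ε * h₁ - β * ε / 2 * h₀)

theorem eval_right_eq (hconn : DerivedConn β ε p q) (hq : q.natDegree ≤ 2) {a r₁ r₂ : ℝ}
    (hp : p = C a * ((X - C r₁) * (X - C r₂))) (w : ℝ) :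
    q.eval w = a * connForm β ε (1 - r₁) (1 - r₂) (w - 1) := by
  obtain ⟨h₀, h₁, h₂⟩ := hconn
  rw [eval_eq_taylor_of_natDegree_le_two hq 1 w, h₀, h₁, h₂, hp]
  simp only [eval_mul, eval_C, eval_sub, eval_X, derivative_mul, derivative_C, zero_mul,
    derivative_sub, derivative_X, sub_zero, one_mul, mul_one, zero_add, eval_add, derivative_add,
    eval_one]
  unfold connForm
  ring

theorem eval_left_eq (hconn : DerivedConn β ε p q) (hp : p.natDegree ≤ 2) {b s₁ s₂ : ℝ}
    (hq : q = C b * ((X - C s₁) * (X - C s₂))) (w : ℝ) :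
    p.eval w = b * connForm β ε (s₁ - 1) (s₂ - 1) (1 - w) := by
  obtain ⟨h₀, h₁, h₂⟩ := hconn
  rw [eval_eq_taylor_of_natDegree_le_two hp 1 w]
  subst hq
  simp only [eval_mul, eval_C, eval_sub, eval_X, derivative_mul, derivative_C, zero_mul,
    derivative_sub, derivative_X, sub_zero, one_mul, mul_one, zero_add, eval_add, derivative_add,
    eval_one] at h₀ h₁ h₂
  unfold connForm
  linear_combination (-1 + β * (w - 1) - β * ε / 4 * (w - 1) ^ 2) * h₀
    + (ε / 2 * (w - 1) ^ 2 - (w - 1)) * h₁ - (w - 1) ^ 2 / 2 * h₂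

theorem sum_rootMultiplicity_le_two (hβ : -4 < β) (hε : -4 < ε) (hconn : DerivedConn β ε p q)
    (hp : p.natDegree ≤ 2) (hq : q.natDegree ≤ 2) {T U : Finset ℝ}
    (hT : ↑T ⊆ Ico (0 : ℝ) 1) (hU : ↑U ⊆ Icc (1 : ℝ) 2) :
    ∑ x ∈ T, p.rootMultiplicity x + ∑ x ∈ U, q.rootMultiplicity x ≤ 2 := by
  have hTle := (sum_rootMultiplicity_le_natDegree p T).trans hp
  have hUle := (sum_rootMultiplicity_le_natDegree q U).trans hq
  rcases le_or_gt 2 (∑ x ∈ T, p.rootMultiplicity x) with hT2 | hT2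
  · obtain ⟨r₁, hr₁, r₂, hr₂, hfac⟩ := exists_eq_C_mul_X_sub_C_mul_X_sub_C hp hT2
    have hp0 : p ≠ 0 := by rintro rfl; simp at hT2
    obtain ⟨h₁0, h₁1⟩ := hT hr₁
    obtain ⟨h₂0, h₂1⟩ := hT hr₂
    suffices ∑ x ∈ U, q.rootMultiplicity x = 0 by omega
    refine Finset.sum_eq_zero fun w hw => rootMultiplicity_eq_zero ?_
    obtain ⟨hw1, hw2⟩ := hU hw
    rw [IsRoot, hconn.eval_right_eq hq hfac]
    exact mul_ne_zero (leadingCoeff_ne_zero.2 hp0) (connForm_pos hβ hε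
      ⟨by linarith, by linarith⟩ ⟨by linarith, by linarith⟩ ⟨by linarith, by linarith⟩
      (Or.inr (mul_pos (by linarith) (by linarith)))).ne'
  · by_contra! h
    obtain ⟨s₁, hs₁, s₂, hs₂, hfac⟩ :=
      exists_eq_C_mul_X_sub_C_mul_X_sub_C hq (T := U) (by omega)
    have hq0 : q ≠ 0 := by
      rintro rfl
      simp only [rootMultiplicity_zero, Finset.sum_const_zero, add_zero] at h
      omega
    obtain ⟨h₁1, h₁2⟩ := hU hs₁
    obtain ⟨h₂1, h₂2⟩ := hU hs₂
    suffices ∑ x ∈ T, p.rootMultiplicity x = 0 by omega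
    refine Finset.sum_eq_zero fun w hw => rootMultiplicity_eq_zero ?_
    obtain ⟨hw0, hw1⟩ := hT hw
    rw [IsRoot, hconn.eval_left_eq hp hfac]
    exact mul_ne_zero (leadingCoeff_ne_zero.2 hq0) (connForm_pos hβ hε
      ⟨by linarith, by linarith⟩ ⟨by linarith, by linarith⟩ ⟨by linarith, by linarith⟩
      (Or.inl (by linarith))).ne'

end DerivedConn

theorem goodForDesign_connMatrix {β ε : ℝ} (hβ : -4 < β) (hε : -4 < ε) :
    GoodForDesign (connMatrix β ε) := by
  intro P Q hP hQ hPQ hne S hS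
  obtain ⟨-, hconn⟩ := conn4_connMatrix_iff.1 hPQ
  have hp : (derivative P).natDegree ≤ 2 := (natDegree_derivative_le P).trans (by omega)
  have hq : (derivative Q).natDegree ≤ 2 := (natDegree_derivative_le Q).trans (by omega)
  have hp0 : derivative P ≠ 0 := fun h => hne ⟨h, (hconn.eq_zero_iff hp hq).1 h⟩
  have hq0 : derivative Q ≠ 0 := fun h => hne ⟨(hconn.eq_zero_iff hp hq).2 h, h⟩
  rw [← Finset.sum_filter_add_sum_filter_not S (· < 1)]
  calc _ ≤ ∑ x ∈ S.filter (· < 1), (derivative P).rootMultiplicity x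
        + ∑ x ∈ S.filter (¬ · < 1), (derivative Q).rootMultiplicity x := by
        gcongr with x hx x hx
        · exact pmult_le_rootMultiplicity_of_eq hp0 (if_pos (Finset.mem_filter.1 hx).2)
        · exact pmult_le_rootMultiplicity_of_eq hq0 (if_neg (Finset.mem_filter.1 hx).2)
    _ ≤ 2 := by
      refine hconn.sum_rootMultiplicity_le_two hβ hε hp hq (fun x hx => ?_) (fun x hx => ?_)
      · obtain ⟨hxS, hx1⟩ := Finset.mem_filter.1 hx
        exact ⟨(hS hxS).1, hx1⟩
      · obtain ⟨hxS, hx1⟩ := Finset.mem_filter.1 hx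
        exact ⟨not_lt.1 hx1, (hS hxS).2⟩

theorem not_goodForDesign_connMatrix_of_beta_le {β ε : ℝ} (hβ : β ≤ -4) :
    ¬ GoodForDesign (connMatrix β ε) := by
  intro hG
  obtain ⟨t, ht0, ht1, htβ⟩ : ∃ t : ℝ, 0 < t ∧ t ≤ 1 ∧ t * β = -4 :=
    ⟨-4 / β, div_pos_of_neg_of_neg (by norm_num) (by linarith),
      (div_le_one_of_neg (by linarith)).2 hβ, div_mul_cancel₀ _ (by linarith)⟩
  have hp : derivative ((X - C (1 - t)) ^ 3) = C 3 * (X - C (1 - t)) ^ 2 := by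
    rw [derivative_X_sub_C_pow]; norm_num
  have hq : derivative ((X - C (1 + t)) ^ 3 + C (2 * t ^ 3)) = C 3 * (X - C (1 + t)) ^ 2 := by
    rw [derivative_add, derivative_C, add_zero, derivative_X_sub_C_pow]; norm_num
  have hconn : Conn4 (connMatrix β ε)
      ((X - C (1 - t)) ^ 3) ((X - C (1 + t)) ^ 3 + C (2 * t ^ 3)) := by
    refine conn4_connMatrix_iff.2 ⟨?_, ?_, ?_, ?_⟩
    · simp only [map_add, map_one, map_mul, map_pow, eval_add, eval_pow, eval_sub, eval_X,
        eval_one, eval_C, sub_add_cancel_left, eval_mul, map_sub, sub_sub_cancel]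
      ring
    · rw [hp, hq]; simp
    · rw [hp, hq]
      simp only [map_add, map_one, derivative_mul, derivative_C, zero_mul, derivative_sq,
        derivative_X, derivative_one, add_zero, sub_zero, mul_one, zero_add, eval_mul, eval_C,
        eval_sub, eval_X, eval_add, eval_one, sub_add_cancel_left, mul_neg, map_sub, eval_pow,
        sub_sub_cancel, sub_self]
      linear_combination (-3 * t) * htβ
    · rw [hp, hq]
      simp only [map_add, map_one, derivative_mul, derivative_C, zero_mul, derivative_sq,
        derivative_X, derivative_one, add_zero, sub_zero, mul_one, zero_add, eval_mul, eval_C,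
        map_sub, eval_pow, eval_sub, eval_X, eval_one, sub_sub_cancel, sub_self, right_eq_add]
      linear_combination (3 / 2 * ε * t) * htβ
  have hS : ↑({1 - t, 1 + t} : Finset ℝ) ⊆ Icc (0 : ℝ) 2 := by
    simp only [Finset.coe_insert, Finset.coe_singleton, insert_subset_iff, singleton_subset_iff,
      mem_Icc]
    exact ⟨⟨by linarith, by linarith⟩, by linarith, by linarith⟩
  have hle := hG _ _ (by compute_degree!) (by compute_degree!) hconn
    (fun h => mul_ne_zero (by simp) (pow_ne_zero 2 (X_sub_C_ne_zero _)) (hp ▸ h.1)) _ hS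
  have h₁ : 2 ≤ pmult (derivative ((X - C (1 - t)) ^ 3))
      (derivative ((X - C (1 + t)) ^ 3 + C (2 * t ^ 3))) (1 - t) := by
    refine le_pmult (by norm_num) fun j hj => ?_
    rw [if_pos (by linarith), hp]
    interval_cases j <;> simp [pev, pder, derivative_sq]
  have h₂ : 2 ≤ pmult (derivative ((X - C (1 - t)) ^ 3))
      (derivative ((X - C (1 + t)) ^ 3 + C (2 * t ^ 3))) (1 + t) := by
    refine le_pmult (by norm_num) fun j hj => ?_
    rw [if_neg (by linarith), hq]
    interval_cases j <;> simp [pev, pder, derivative_sq]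
  rw [Finset.sum_pair (by linarith)] at hle
  omega

theorem not_goodForDesign_connMatrix_of_epsilon_le {β ε : ℝ} (hε : ε ≤ -4) :
    ¬ GoodForDesign (connMatrix β ε) := by
  intro hG
  obtain ⟨s, hs1, hs2, hsε⟩ : ∃ s : ℝ, 1 < s ∧ s ≤ 2 ∧ (ε + 2) * s = ε :=
    ⟨ε / (ε + 2), (one_lt_div_of_neg (by linarith)).2 (by linarith),
      (div_le_iff_of_neg (by linarith)).2 (by linarith), mul_div_cancel₀ _ (by linarith)⟩
  set P : ℝ[X] := 2 * X ^ 3 - 3 * X ^ 2 with hP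
  set Q : ℝ[X] := C (ε + 2) * X ^ 3 - C (3 * (ε + 1)) * X ^ 2 + C (3 * ε) * X - C ε with hQ
  have hconn : Conn4 (connMatrix β ε) P Q := by
    refine conn4_connMatrix_iff.2 ⟨?_, ?_, ?_, ?_⟩ <;>
      simp only [P, Q, map_add, map_mul, map_one, eval_sub, eval_add, eval_mul, eval_C, eval_pow,
        eval_X, one_pow, mul_one, eval_one, eval_ofNat, derivative_sub, derivative_mul,
        derivative_C, add_zero, zero_mul, derivative_X_pow_succ, Nat.cast_ofNat, zero_add,
        derivative_one, mul_zero, Nat.cast_one, pow_one, derivative_X, sub_zero,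
        derivative_ofNat] <;>
      ring
  have hS : ↑({0, 1, s} : Finset ℝ) ⊆ Icc (0 : ℝ) 2 := by
    simp only [Finset.coe_insert, Finset.coe_singleton, insert_subset_iff, singleton_subset_iff,
      mem_Icc]
    exact ⟨⟨le_rfl, by norm_num⟩, ⟨by norm_num, by norm_num⟩, by linarith, hs2⟩
  have hle := hG P Q (by rw [hP]; compute_degree!) (by rw [hQ]; compute_degree!) hconn
    (fun h => by
      have := congrArg (eval 1) (congrArg derivative h.1)
      norm_num [P] at this) _ hS
  have h₀ : 1 ≤ pmult (derivative P) (derivative Q) 0 := by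
    refine le_pmult (by norm_num) fun j hj => ?_
    obtain rfl : j = 0 := by omega
    simp [pev, pder, P]
  have h₁ : 1 ≤ pmult (derivative P) (derivative Q) 1 := by
    refine le_pmult (by norm_num) fun j hj => ?_
    obtain rfl : j = 0 := by omega
    simp only [pev, pder, lt_self_iff_false, ↓reduceIte, Q, map_add, map_mul, map_one,
      derivative_sub, derivative_mul, derivative_C, add_zero, zero_mul, derivative_X_pow_succ,
      Nat.cast_ofNat, zero_add, derivative_one, mul_zero, Nat.cast_one, pow_one, derivative_X,
      mul_one, sub_zero, eval_add, eval_sub, eval_mul, eval_C, eval_one, eval_pow, eval_X, one_pow]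
    ring
  have h₂ : 1 ≤ pmult (derivative P) (derivative Q) s := by
    refine le_pmult (by norm_num) fun j hj => ?_
    obtain rfl : j = 0 := by omega
    rw [if_neg (by linarith)]
    simp only [pev, pder, Q, map_add, map_mul, map_one, derivative_sub, derivative_mul,
      derivative_C, add_zero, zero_mul, derivative_X_pow_succ, Nat.cast_ofNat, zero_add,
      derivative_one, mul_zero, Nat.cast_one, pow_one, derivative_X, mul_one, sub_zero, eval_add,
      eval_sub, eval_mul, eval_C, eval_one, eval_pow, eval_X]
    linear_combination (3 * (s - 1)) * hsε
  have hs0 : (0 : ℝ) ∉ ({1, s} : Finset ℝ) := by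
    simp only [Finset.mem_insert, zero_ne_one, Finset.mem_singleton, false_or]
    exact fun h => by linarith
  rw [Finset.sum_insert hs0, Finset.sum_pair (by linarith)] at hle
  omega

/-- Theorem: the piecewise cubic PW-space on `([0,2];(1))` with connection matrix
`M = [[1,0,0,0],[0,1,0,0],[0,β,1,0],[0,βε/2,ε,1]]` is an ECP-space good for design
iff `β > −4` and `ε > −4`. -/
theorem stmt18 (β ε : ℝ) :
    GoodForDesign !![1, 0, 0, 0; 0, 1, 0, 0; 0, β, 1, 0; 0, β * ε / 2, ε, 1] ↔
      (-4 < β ∧ -4 < ε) :=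
  ⟨fun h => ⟨lt_of_not_ge fun hβ => not_goodForDesign_connMatrix_of_beta_le hβ h,
      lt_of_not_ge fun hε => not_goodForDesign_connMatrix_of_epsilon_le hε h⟩,
    fun ⟨hβ, hε⟩ => goodForDesign_connMatrix hβ hε⟩
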